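/- The total number of ordered prefix tables on [n] equals Σ_{k=1}^{n} (k−1)! · k! · S(n,k) · S(n+1,k), where S denotes Stirling numbers of the second kind. -/

import Mathlib

/-- Stirling numbers of the second kind. -/
def stirling2 : ℕ → ℕ → ℕ
  | 0, 0 => 1
  | 0, _ + 1 => 0
  | _ + 1, 0 => 0
  | n + 1, k + 1 => (k + 1) * stirling2 n (k + 1) + stirling2 n k

/-- An ordered prefix table on `[n]`. -/
def IsOPT {n : ℕ} (f : Fin n → Finset (Fin n)) : Prop :=
  (∀ u, (f u).Nonempty) ∧ (∀ i j, f i ⊆ f j ∨ f j ⊆ f i) ∧ ∃ i, ∀ j, f i ⊆ f j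

/-!
Sort the tables by rank `m`, and let `B₀ ⊊ ⋯ ⊊ B_{m-1}` be the values other than `[n]`, with
`B_m = [n]`. The table is recorded by two maps into `{0, …, m}`: the *level* `q x`, the number of
`B_t` missing `x`, and the *height* `p i`, the index of `f i` in the chain. Since the `B_t` are
nonempty and strictly increasing, `q` is surjective; every `B_t` with `t < m` is a value, so `p`
hits every index below `m`; and `f i = {x | q x ≤ p i}`. Conversely any such pair `(q, p)` builds a
table of rank `m`. There are `(m+1)! S(n, m+1)` choices of `q` and `m! S(n+1, m+1)` of `p`: a
surjection `g : [n+1] → {0, …, m}` is the same as the value `g 0` together with a map on the other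
`n` points that, after swapping `g 0` with `m`, hits everything below `m`.
-/

open Finset in
theorem Nat.card_subtype_eq_sum_card_fiberwise {α β : Type*} [Finite α] {P : α → Prop}
    {g : α → β} {t : Finset β} (H : ∀ a, P a → g a ∈ t) :
    Nat.card {a // P a} = ∑ b ∈ t, Nat.card {a // P a ∧ g a = b} := by
  classical
  have := Fintype.ofFinite α
  simp only [Nat.card_eq_fintype_card, Fintype.card_subtype]
  rw [card_eq_sum_card_fiberwise fun a ha => H a (mem_filter.mp ha).2]
  simp only [filter_filter]

section Counting

open Function Nat

variable {α β γ : Type*}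

theorem Set.compl_singleton_subset_iff {a : γ} {s : Set γ} :
    {a}ᶜ ⊆ s ↔ s = Set.univ ∨ s = {a}ᶜ := by
  rw [Set.compl_subset_comm, Set.subset_singleton_iff_eq, Set.compl_empty_iff, compl_eq_comm]
  exact or_congr_right eq_comm

theorem Fin.range_castSucc_eq_compl_last (k : ℕ) :
    Set.range (Fin.castSucc : Fin k → Fin (k + 1)) = {Fin.last k}ᶜ := by
  ext i
  simp [Fin.range_castSucc, Fin.ext_iff, Nat.lt_iff_le_and_ne, Nat.le_of_lt_succ i.isLt]

theorem Nat.card_range_eq_range_eq_card_surjective {e : β → γ} (he : Injective e) :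
    Nat.card {p : α → γ // Set.range p = Set.range e} = Nat.card {g : α → β // Surjective g} := by
  refine (Nat.card_congr (Equiv.ofBijective
    (fun g => ⟨e ∘ g.1, by rw [Set.range_comp, g.2.range_eq, Set.image_univ]⟩) ⟨?_, ?_⟩)).symm
  · intro g g' h
    exact Subtype.ext (he.comp_left (congrArg Subtype.val h))
  · rintro ⟨p, hp⟩
    obtain ⟨g, rfl⟩ := Set.range_subset_range_iff_exists_comp.mp hp.le
    refine ⟨⟨g, ?_⟩, rfl⟩
    rwa [Set.range_comp, ← Set.image_univ (f := e), (Set.image_injective.mpr he).eq_iff,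
      Set.range_eq_univ] at hp

theorem card_compl_last_subset_range_eq_add [Finite α] (k : ℕ) :
    Nat.card {p : α → Fin (k + 1) // {Fin.last k}ᶜ ⊆ Set.range p} =
      Nat.card {g : α → Fin (k + 1) // Surjective g} +
        Nat.card {g : α → Fin k // Surjective g} := by
  classical
  have hdisj : Disjoint (fun p : α → Fin (k + 1) => Surjective p)
      (fun p => Set.range p = {Fin.last k}ᶜ) := by
    simp only [Pi.disjoint_iff, Prop.disjoint_iff, not_and, ← Set.range_eq_univ]
    intro p hp hr
    simp [hr] at hp
  rw [Nat.card_congr ((Equiv.subtypeEquivRight fun p => by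
      rw [Set.compl_singleton_subset_iff, Set.range_eq_univ]).trans
    (subtypeOrEquiv _ _ hdisj)), Nat.card_sum, ← Fin.range_castSucc_eq_compl_last,
    Nat.card_range_eq_range_eq_card_surjective (Fin.castSucc_injective k)]

def surjectiveSuccEquiv (n k : ℕ) :
    {g : Fin (n + 1) → Fin (k + 1) // Surjective g} ≃
      Fin (k + 1) × {p : Fin n → Fin (k + 1) // {Fin.last k}ᶜ ⊆ Set.range p} where
  toFun g := (g.1 0, ⟨Equiv.swap (g.1 0) (Fin.last k) ∘ Fin.tail g.1, by
    intro y hy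
    obtain ⟨w, hw⟩ := g.2 (Equiv.swap (g.1 0) (Fin.last k) y)
    cases w using Fin.cases with
    | zero => exact absurd (by simpa using Equiv.swap_apply_eq_iff.mp hw.symm) hy
    | succ v => exact ⟨v, by simp [Fin.tail, hw]⟩⟩)
  invFun ap := ⟨Fin.cons ap.1 (Equiv.swap ap.1 (Fin.last k) ∘ ap.2.1), by
    intro y
    by_cases hy : y = ap.1
    · exact ⟨0, by simp [hy]⟩
    · obtain ⟨v, hv⟩ := ap.2.2 (show Equiv.swap ap.1 (Fin.last k) y ≠ Fin.last k by
        simpa [Equiv.swap_apply_eq_iff] using hy)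
      exact ⟨v.succ, by simp [hv]⟩⟩
  left_inv g := by
    ext1
    simp [Function.comp_def, Fin.cons_self_tail]
  right_inv ap := by
    ext1
    · simp
    · ext1; simp [Function.comp_def]

theorem card_surjective_fin (n k : ℕ) :
    Nat.card {g : Fin n → Fin k // Surjective g} = k ! * stirling2 n k := by
  induction n generalizing k with
  | zero =>
    cases k with
    | zero =>
      exact Nat.card_eq_one_iff_exists.mpr
        ⟨⟨Fin.elim0, fun b => b.elim0⟩, fun g => Subsingleton.elim _ _⟩
    | succ k =>
      have : IsEmpty {g : Fin 0 → Fin (k + 1) // Surjective g} := ⟨fun g => (g.2 0).choose.elim0⟩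
      simp [stirling2]
  | succ n ih =>
    cases k with
    | zero =>
      have : IsEmpty {g : Fin (n + 1) → Fin 0 // Surjective g} := ⟨fun g => (g.1 0).elim0⟩
      simp [stirling2]
    | succ k =>
      rw [Nat.card_congr (surjectiveSuccEquiv n k), Nat.card_prod, Nat.card_fin,
        card_compl_last_subset_range_eq_add, ih, ih, stirling2, factorial_succ]
      ring

theorem card_compl_last_subset_range (n k : ℕ) :
    Nat.card {p : Fin n → Fin (k + 1) // {Fin.last k}ᶜ ⊆ Set.range p} =
      k ! * stirling2 (n + 1) (k + 1) := by
  have h := Nat.card_congr (surjectiveSuccEquiv n k)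
  rw [Nat.card_prod, Nat.card_fin, card_surjective_fin, factorial_succ, mul_assoc] at h
  exact (Nat.eq_of_mul_eq_mul_left k.succ_pos h).symm

end Counting

namespace FinsetChain

open Finset

variable {α : Type*} [DecidableEq α]

def level (S : Finset (Finset α)) (x : α) : ℕ := #{B ∈ S | x ∉ B}

def height (S : Finset (Finset α)) (A : Finset α) : ℕ := #{B ∈ S | B ⊂ A}

variable {S : Finset (Finset α)} {A A' : Finset α} {x : α}

theorem level_le (x : α) : level S x ≤ #S := card_filter_le _ _

theorem height_le (A : Finset α) : height S A ≤ #S := card_filter_le _ _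

theorem height_mono (h : A ⊆ A') : height S A ≤ height S A' :=
  card_le_card <| monotone_filter_right _ fun _ _ hB => hB.trans_subset h

theorem height_lt_height (hA : A ∈ S) (h : A ⊂ A') : height S A < height S A' := by
  refine card_lt_card ⟨monotone_filter_right _ fun _ _ hB => hB.trans h, fun hsub => ?_⟩
  exact ssubset_irrefl A (mem_filter.mp (hsub (mem_filter.mpr ⟨hA, h⟩))).2

variable [Fintype α]

theorem height_univ (huniv : univ ∉ S) : height S univ = #S := by
  refine congrArg card (filter_true_of_mem fun B hB => ?_)
  exact (subset_univ B).ssubset_of_ne (ne_of_mem_of_not_mem hB huniv)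

theorem subset_total (hS : IsChain (· ⊆ ·) (S : Set (Finset α)))
    (hA : A ∈ insert univ S) (hA' : A' ∈ insert univ S) : A ⊆ A' ∨ A' ⊆ A := by
  rcases mem_insert.mp hA with rfl | hA
  · exact Or.inr (subset_univ _)
  rcases mem_insert.mp hA' with rfl | hA'
  · exact Or.inl (subset_univ _)
  exact hS.total hA hA'

theorem mem_iff_level_le_height (hS : IsChain (· ⊆ ·) (S : Set (Finset α)))
    (hA : A ∈ insert univ S) : x ∈ A ↔ level S x ≤ height S A := by
  constructor
  · intro hx
    refine card_le_card (monotone_filter_right _ fun B hB hxB => ?_)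
    rcases subset_total hS (mem_insert_of_mem hB) hA with h | h
    · exact h.ssubset_of_ne fun hBA => hxB (hBA ▸ hx)
    · exact absurd (h hx) hxB
  · intro hle
    by_contra hx
    have hAS : A ∈ S := (mem_insert.mp hA).resolve_left (by rintro rfl; exact hx (mem_univ x))
    refine hle.not_gt (card_lt_card ⟨monotone_filter_right _ fun B _ hB hxB => hx (hB.1 hxB), ?_⟩)
    intro hsub
    exact ssubset_irrefl A (mem_filter.mp (hsub (mem_filter.mpr ⟨hAS, hx⟩))).2

theorem image_height (hS : IsChain (· ⊆ ·) (S : Set (Finset α))) (huniv : univ ∉ S) :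
    (insert univ S).image (height S) = range (#S + 1) := by
  have hinj : Set.InjOn (height S) (insert univ S : Finset (Finset α)) := by
    have hlt {A A'} (hA : A ∈ insert univ S) (h : A ⊂ A') : height S A < height S A' :=
      height_lt_height ((mem_insert.mp hA).resolve_left (h.trans_subset (subset_univ _)).ne) h
    intro A hA A' hA' heq
    by_contra hne
    rcases subset_total hS hA hA' with h | h
    · exact (hlt hA (h.ssubset_of_ne hne)).ne heq
    · exact (hlt hA' (h.ssubset_of_ne (Ne.symm hne))).ne heq.symm
  refine eq_of_subset_of_card_le (fun t ht => ?_) ?_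
  · obtain ⟨A, -, rfl⟩ := mem_image.mp ht
    exact mem_range.mpr (Nat.lt_succ_of_le (height_le A))
  · rw [card_range, card_image_of_injOn hinj, card_insert_of_notMem huniv]

theorem exists_height_eq_of_le (hS : IsChain (· ⊆ ·) (S : Set (Finset α))) (huniv : univ ∉ S)
    {t : ℕ} (ht : t ≤ #S) : ∃ A ∈ insert univ S, height S A = t :=
  mem_image.mp ((image_height hS huniv).symm ▸ mem_range.mpr (Nat.lt_succ_of_le ht))

theorem exists_height_eq_of_lt (hS : IsChain (· ⊆ ·) (S : Set (Finset α))) (huniv : univ ∉ S)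
    {t : ℕ} (ht : t < #S) : ∃ A ∈ S, height S A = t := by
  obtain ⟨A, hA, rfl⟩ := exists_height_eq_of_le hS huniv ht.le
  rcases mem_insert.mp hA with rfl | hA
  · exact absurd (height_univ huniv) ht.ne
  · exact ⟨A, hA, rfl⟩

theorem exists_level_eq [Nonempty α] (hS : IsChain (· ⊆ ·) (S : Set (Finset α)))
    (huniv : univ ∉ S) (hempty : ∅ ∉ S) {t : ℕ} (ht : t ≤ #S) : ∃ x, level S x = t := by
  obtain ⟨A, hA, hAt⟩ := exists_height_eq_of_le hS huniv ht
  cases t with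
  | zero =>
    have hne : A.Nonempty := by
      rcases mem_insert.mp hA with rfl | hA
      · exact univ_nonempty
      · exact nonempty_iff_ne_empty.mpr (ne_of_mem_of_not_mem hA hempty)
    obtain ⟨x, hx⟩ := hne
    exact ⟨x, Nat.le_zero.mp (hAt ▸ (mem_iff_level_le_height hS hA).mp hx)⟩
  | succ s =>
    obtain ⟨A', hA', hA's⟩ := exists_height_eq_of_le hS huniv (by omega : s ≤ #S)
    have hsub : A' ⊂ A := by
      refine ((subset_total hS hA hA').resolve_left fun h => ?_).ssubset_of_ne ?_
      · exact absurd (height_mono (S := S) h) (by omega)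
      · rintro rfl; omega
    obtain ⟨x, hxA, hxA'⟩ := exists_of_ssubset hsub
    have h1 := (mem_iff_level_le_height hS hA).mp hxA
    have h2 := (mem_iff_level_le_height hS hA').not.mp hxA'
    exact ⟨x, by omega⟩

end FinsetChain

namespace OrderedPrefixTable

open Finset Function Nat FinsetChain

section Values

variable {ι α : Type*} [Fintype ι] [Fintype α] [DecidableEq α]

def properValues (f : ι → Finset α) : Finset (Finset α) := (univ.image f).erase univ

def rank (f : ι → Finset α) : ℕ := #(properValues f)

variable {f : ι → Finset α}

theorem mem_insert_univ_properValues (i : ι) : f i ∈ insert univ (properValues f) := by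
  by_cases h : f i = univ
  · exact h ▸ mem_insert_self _ _
  · exact mem_insert_of_mem (mem_erase.mpr ⟨h, mem_image_of_mem f (mem_univ i)⟩)

theorem univ_notMem_properValues : univ ∉ properValues f := notMem_erase _ _

theorem empty_notMem_properValues (hf : ∀ i, (f i).Nonempty) : ∅ ∉ properValues f := by
  intro h
  obtain ⟨i, -, hi⟩ := mem_image.mp (mem_of_mem_erase h)
  exact (hf i).ne_empty hi

theorem isChain_properValues (hf : ∀ i j, f i ⊆ f j ∨ f j ⊆ f i) :
    IsChain (· ⊆ ·) (properValues f : Set (Finset α)) := by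
  rintro A hA B hB -
  obtain ⟨i, -, rfl⟩ := mem_image.mp (mem_of_mem_erase hA)
  obtain ⟨j, -, rfl⟩ := mem_image.mp (mem_of_mem_erase hB)
  exact hf i j

theorem mem_iff_level_le_height (hf : ∀ i j, f i ⊆ f j ∨ f j ⊆ f i) (i : ι) (x : α) :
    x ∈ f i ↔ level (properValues f) x ≤ height (properValues f) (f i) :=
  FinsetChain.mem_iff_level_le_height (isChain_properValues hf) (mem_insert_univ_properValues i)

theorem exists_height_eq (hf : ∀ i j, f i ⊆ f j ∨ f j ⊆ f i) {t : ℕ} (ht : t < rank f) :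
    ∃ i, height (properValues f) (f i) = t := by
  obtain ⟨A, hA, rfl⟩ :=
    exists_height_eq_of_lt (isChain_properValues hf) univ_notMem_properValues ht
  obtain ⟨i, -, rfl⟩ := mem_image.mp (mem_of_mem_erase hA)
  exact ⟨i, rfl⟩

theorem exists_level_eq [Nonempty α] (hne : ∀ i, (f i).Nonempty)
    (hf : ∀ i j, f i ⊆ f j ∨ f j ⊆ f i) {t : ℕ} (ht : t ≤ rank f) :
    ∃ x, level (properValues f) x = t :=
  FinsetChain.exists_level_eq (isChain_properValues hf) univ_notMem_properValues
    (empty_notMem_properValues hne) ht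

end Values

section Sublevel

variable {ι α β : Type*} [Fintype α]

def sublevel [LinearOrder β] (q : α → β) (t : β) : Finset α := {x | q x ≤ t}

theorem sublevel_strictMono [LinearOrder β] {q : α → β} (hq : Surjective q) :
    StrictMono (sublevel q) := by
  intro s t hst
  obtain ⟨x, rfl⟩ := hq t
  refine (ssubset_iff_of_subset fun y hy => ?_).mpr ⟨x, ?_, ?_⟩
  · simp only [sublevel, mem_filter, mem_univ, true_and] at hy ⊢
    exact hy.trans hst.le
  · simp [sublevel]
  · simpa [sublevel] using hst

variable {m : ℕ} {q : α → Fin (m + 1)} {p : ι → Fin (m + 1)}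

theorem sublevel_last (q : α → Fin (m + 1)) : sublevel q (Fin.last m) = univ := by
  ext x
  simp [sublevel, Fin.le_last]

theorem card_filter_lt_Iio_last (t : Fin (m + 1)) : #{s ∈ Iio (Fin.last m) | s < t} = t := by
  rw [← Fin.card_Iio t]
  congr 1
  ext s
  simp only [mem_filter, mem_Iio]
  exact ⟨And.right, fun h => ⟨h.trans_le (Fin.le_last t), h⟩⟩

variable [Fintype ι] [DecidableEq α]

theorem properValues_sublevel_comp (hq : Surjective q) (hp : {Fin.last m}ᶜ ⊆ Set.range p) :
    properValues (sublevel q ∘ p) = (Iio (Fin.last m)).image (sublevel q) := by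
  have hinj := (sublevel_strictMono hq).injective
  ext B
  simp only [properValues, mem_erase, mem_image, mem_univ, true_and, comp_apply, mem_Iio]
  constructor
  · rintro ⟨hB, i, rfl⟩
    exact ⟨p i, Fin.lt_last_iff_ne_last.mpr fun h => hB (by rw [h, sublevel_last]), rfl⟩
  · rintro ⟨t, ht, rfl⟩
    obtain ⟨i, hi⟩ := hp ht.ne
    exact ⟨fun h => ht.ne (hinj (h.trans (sublevel_last q).symm)), i, by rw [hi]⟩

theorem rank_sublevel_comp (hq : Surjective q) (hp : {Fin.last m}ᶜ ⊆ Set.range p) :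
    rank (sublevel q ∘ p) = m := by
  rw [rank, properValues_sublevel_comp hq hp,
    card_image_of_injective _ (sublevel_strictMono hq).injective, Fin.card_Iio, Fin.val_last]

theorem level_properValues_sublevel_comp (hq : Surjective q) (hp : {Fin.last m}ᶜ ⊆ Set.range p)
    (x : α) : level (properValues (sublevel q ∘ p)) x = q x := by
  rw [level, properValues_sublevel_comp hq hp, filter_image,
    card_image_of_injective _ (sublevel_strictMono hq).injective]
  simp only [sublevel, mem_filter, mem_univ, true_and, not_le]
  exact card_filter_lt_Iio_last (q x)

theorem height_properValues_sublevel_comp (hq : Surjective q) (hp : {Fin.last m}ᶜ ⊆ Set.range p)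
    (t : Fin (m + 1)) : height (properValues (sublevel q ∘ p)) (sublevel q t) = t := by
  rw [height, properValues_sublevel_comp hq hp, filter_image,
    card_image_of_injective _ (sublevel_strictMono hq).injective,
    filter_congr fun s _ => (sublevel_strictMono hq).lt_iff_lt]
  exact card_filter_lt_Iio_last t

end Sublevel

theorem isOPT_sublevel_comp {n m : ℕ} {q : Fin n → Fin (m + 1)} (hq : Surjective q)
    (p : Fin n → Fin (m + 1)) : IsOPT (sublevel q ∘ p) := by
  have mono {s t : Fin (m + 1)} (h : s ≤ t) : sublevel q s ⊆ sublevel q t :=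
    (sublevel_strictMono hq).monotone h
  obtain ⟨x₀, hx₀⟩ := hq 0
  have : Nonempty (Fin n) := ⟨x₀⟩
  obtain ⟨i₀, hi₀⟩ := Finite.exists_min p
  refine ⟨fun i => ⟨x₀, ?_⟩, fun i j => (le_total (p i) (p j)).imp mono mono, i₀,
    fun j => mono (hi₀ j)⟩
  simp [sublevel, hx₀]

def rankFiberEquiv (n m : ℕ) :
    {f : Fin n → Finset (Fin n) // IsOPT f ∧ rank f = m} ≃
      {q : Fin n → Fin (m + 1) // Surjective q} ×
        {p : Fin n → Fin (m + 1) // {Fin.last m}ᶜ ⊆ Set.range p} where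
  toFun f :=
    (⟨fun x => ⟨level (properValues f.1) x, Nat.lt_succ_of_le ((level_le x).trans_eq f.2.2)⟩,
      fun t => by
        have : Nonempty (Fin n) := ⟨f.2.1.2.2.choose⟩
        obtain ⟨x, hx⟩ :=
          exists_level_eq f.2.1.1 f.2.1.2.1 ((Nat.le_of_lt_succ t.2).trans_eq f.2.2.symm)
        exact ⟨x, Fin.ext hx⟩⟩,
     ⟨fun i => ⟨height (properValues f.1) (f.1 i),
        Nat.lt_succ_of_le ((height_le _).trans_eq f.2.2)⟩,
      fun t ht => by
        obtain ⟨i, hi⟩ := exists_height_eq f.2.1.2.1 ((Fin.val_lt_last ht).trans_eq f.2.2.symm)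
        exact ⟨i, Fin.ext hi⟩⟩)
  invFun qp :=
    ⟨sublevel qp.1.1 ∘ qp.2.1, isOPT_sublevel_comp qp.1.2 _, rank_sublevel_comp qp.1.2 qp.2.2⟩
  left_inv f := Subtype.ext <| funext fun i => Finset.ext fun x => by
    simp [sublevel, Fin.le_iff_val_le_val, mem_iff_level_le_height f.2.1.2.1]
  right_inv qp := Prod.ext
    (Subtype.ext <| funext fun x => Fin.ext (level_properValues_sublevel_comp qp.1.2 qp.2.2 x))
    (Subtype.ext <| funext fun i => Fin.ext (height_properValues_sublevel_comp qp.1.2 qp.2.2 _))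

theorem rank_lt_of_isOPT {n : ℕ} {f : Fin n → Finset (Fin n)} (hf : IsOPT f) : rank f < n := by
  have q := (rankFiberEquiv n (rank f) ⟨f, hf, rfl⟩).1
  simpa using Fintype.card_le_of_surjective q.1 q.2

theorem card_isOPT_rank_eq (n m : ℕ) :
    Nat.card {f : Fin n → Finset (Fin n) // IsOPT f ∧ rank f = m} =
      (m + 1)! * stirling2 n (m + 1) * (m ! * stirling2 (n + 1) (m + 1)) := by
  rw [Nat.card_congr (rankFiberEquiv n m), Nat.card_prod, card_surjective_fin,
    card_compl_last_subset_range]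

end OrderedPrefixTable

theorem count_ordered_prefix_tables_general {n : ℕ} :
    Nat.card {f : Fin n → Finset (Fin n) // IsOPT f} =
      ∑ k ∈ Finset.Icc 1 n,
        Nat.factorial (k - 1) * Nat.factorial k * stirling2 n k * stirling2 (n + 1) k := by
  rw [Nat.card_subtype_eq_sum_card_fiberwise fun f hf =>
      Finset.mem_range.mpr (OrderedPrefixTable.rank_lt_of_isOPT hf),
    ← Finset.Ico_add_one_right_eq_Icc, Finset.sum_Ico_eq_sum_range, Nat.add_sub_cancel]
  refine Finset.sum_congr rfl fun m _ => ?_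
  rw [OrderedPrefixTable.card_isOPT_rank_eq, add_comm 1 m, Nat.add_sub_cancel]
  ring

theorem count_ordered_prefix_tables {n : ℕ} (hn : 1 ≤ n) :
    Nat.card {f : Fin n → Finset (Fin n) // IsOPT f} =
      ∑ k ∈ Finset.Icc 1 n,
        Nat.factorial (k - 1) * Nat.factorial k * stirling2 n k * stirling2 (n + 1) k :=
  count_ordered_prefix_tables_general
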